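/- Let p be a straight-line RAC drawing of a finite simple graph G, let u ≠ v be vertices of G, and let T be the set of vertices t of G whose neighborhood is exactly {u, v}. Then in each of the two open half-planes bounded by the line through p(u) and p(v), there is at most one point of ℝ² that lies simultaneously in the relative interior of a segment [p(u), p(t)] for some t ∈ T and in the relative interior of a segment [p(v), p(t′)] for some t′ ∈ T. -/

import Mathlib

noncomputable section

abbrev Pt : Type := EuclideanSpace ℝ (Fin 2)

/-- `p` is a straight-line RAC drawing of the simple graph `G`: it is injective, no vertex
lies in the relative interior of a non-incident edge segment, segments of two edges sharing
an endpoint meet only in the image of that shared endpoint, and segments of two edges with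
disjoint endpoint sets may only cross in their relative interiors, at a right angle. -/
def IsSLRAC {V : Type*} (G : SimpleGraph V) (p : V → Pt) : Prop :=
  Function.Injective p ∧
  (∀ w u v : V, G.Adj u v → w ≠ u → w ≠ v → p w ∉ openSegment ℝ (p u) (p v)) ∧
  (∀ u v w : V, G.Adj u v → G.Adj u w → v ≠ w →
    segment ℝ (p u) (p v) ∩ segment ℝ (p u) (p w) ⊆ {p u}) ∧
  (∀ u v x y : V, G.Adj u v → G.Adj x y → u ≠ x → u ≠ y → v ≠ x → v ≠ y →
    ∀ q ∈ segment ℝ (p u) (p v) ∩ segment ℝ (p x) (p y),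
      q ∈ openSegment ℝ (p u) (p v) ∧ q ∈ openSegment ℝ (p x) (p y) ∧
        (inner ℝ (p v - p u) (p y - p x) : ℝ) = 0)

end



lemma key_exists (D2 x₁ x₂ y₁ y₂ : ℝ) (hD : 0 < D2)
    (hx : x₁^2 - D2*x₁ + x₂^2 = 0) (hy : y₁^2 - D2*y₁ + y₂^2 = 0)
    (hx2 : 0 < x₂) (hy2 : 0 < y₂) (hxy : x₁ < y₁) :
    ∃ t s : ℝ, 0 < t ∧ t < 1 ∧ 0 < s ∧ s < 1 ∧
      t*y₁ = (1-s)*D2 + s*x₁ ∧ t*y₂ = s*x₂ := by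
  have hx1 : 0 < x₁ := by nlinarith
  have hx1' : x₁ < D2 := by nlinarith
  have hy1 : 0 < y₁ := by nlinarith
  have hy1' : y₁ < D2 := by nlinarith
  set E : ℝ := x₂*y₁ + y₂*(D2 - x₁) with hE
  have hEpos : 0 < E := by
    have : 0 < x₂ * y₁ := mul_pos hx2 hy1
    have : 0 < y₂ * (D2 - x₁) := mul_pos hy2 (by linarith)
    linarith
  refine ⟨D2*x₂/E, D2*y₂/E, by positivity, ?_, by positivity, ?_, ?_, ?_⟩
  · rw [div_lt_one hEpos]
    -- need D2*x₂ < E  ⇔  x₂*(D2-y₁) < y₂*(D2-x₁)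
    have hsq : (y₂*(D2-x₁))^2 - (x₂*(D2-y₁))^2 = (D2-x₁)*(D2-y₁)*D2*(y₁-x₁) := by
      linear_combination ((D2-x₁)^2)*hy - ((D2-y₁)^2)*hx
    have h1 : 0 < x₂*(D2-y₁) := mul_pos hx2 (by linarith)
    have h2 : 0 < y₂*(D2-x₁) := mul_pos hy2 (by linarith)
    have hpos : 0 < (D2-x₁)*(D2-y₁)*D2*(y₁-x₁) := by
      have : 0 < (D2-x₁)*(D2-y₁) := mul_pos (by linarith) (by linarith)
      have : 0 < D2*(y₁-x₁) := mul_pos hD (by linarith)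
      nlinarith
    have h3 : x₂*(D2-y₁) < y₂*(D2-x₁) := by nlinarith [mul_pos h1 h2, sq_nonneg (x₂*(D2-y₁) - y₂*(D2-x₁))]
    rw [hE]; nlinarith
  · rw [div_lt_one hEpos]
    -- need D2*y₂ < E ⇔ y₂*x₁ < x₂*y₁
    have hsq : (x₂*y₁)^2 - (y₂*x₁)^2 = x₁*y₁*D2*(y₁-x₁) := by
      linear_combination y₁^2*hx - x₁^2*hy
    have h1 : 0 < y₂*x₁ := mul_pos hy2 hx1
    have h2 : 0 < x₂*y₁ := mul_pos hx2 hy1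
    have hpos : 0 < x₁*y₁*D2*(y₁-x₁) := by
      have : 0 < x₁*y₁ := mul_pos hx1 hy1
      have : 0 < D2*(y₁-x₁) := mul_pos hD (by linarith)
      nlinarith
    have h3 : y₂*x₁ < x₂*y₁ := by nlinarith [mul_pos h1 h2, sq_nonneg (y₂*x₁ - x₂*y₁)]
    rw [hE]; nlinarith
  · field_simp
    ring
  · field_simp

lemma ortho_contra (D2 x₁ x₂ y₁ y₂ : ℝ) (hD : 0 < D2)
    (hx : x₁^2 - D2*x₁ + x₂^2 = 0) (hy : y₁^2 - D2*y₁ + y₂^2 = 0)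
    (hx2 : x₂ ≠ 0) (hy2 : y₂ ≠ 0) (hxy : x₁ < y₁)
    (horth : y₁*(x₁ - D2) + y₂*x₂ = 0) : False := by
  have hx2' : 0 < x₂^2 := by positivity
  have hy2' : 0 < y₂^2 := by positivity
  have hx1 : 0 < x₁ := by nlinarith
  have hx1' : x₁ < D2 := by nlinarith
  have hy1 : 0 < y₁ := by nlinarith
  have hy1' : y₁ < D2 := by nlinarith
  have h1 : y₂*x₂ = y₁*(D2-x₁) := by linarith
  have h2 : (y₂*x₂)^2 = (y₁*(D2-x₁))^2 := by rw [h1]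
  have h3 : y₁*(D2-x₁)*(x₁*(D2-y₁) - y₁*(D2-x₁)) = 0 := by
    linear_combination h2 - y₂^2*hx - x₁*(D2-x₁)*hy
  have h4 : x₁*(D2-y₁) - y₁*(D2-x₁) = 0 := by
    rcases mul_eq_zero.mp h3 with h | h
    · exact absurd h (ne_of_gt (mul_pos hy1 (by linarith)))
    · exact h
  have h5 : D2*(x₁ - y₁) = 0 := by linear_combination h4
  have h6 : D2*(x₁ - y₁) < 0 := mul_neg_of_pos_of_neg hD (by linarith)
  linarith


def Xc (a b z : Pt) : ℝ := (b 0 - a 0) * (z 0 - a 0) + (b 1 - a 1) * (z 1 - a 1)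
def Yc (a b z : Pt) : ℝ := (b 0 - a 0) * (z 1 - a 1) - (b 1 - a 1) * (z 0 - a 0)

lemma inner_coord (x y : Pt) : (inner ℝ x y : ℝ) = x 0 * y 0 + x 1 * y 1 := by
  simp [PiLp.inner_apply, Fin.sum_univ_two, RCLike.inner_apply, mul_comm]

lemma D2_pos {a b : Pt} (h : a ≠ b) : 0 < (b 0 - a 0)^2 + (b 1 - a 1)^2 := by
  by_contra hc
  push_neg at hc
  have h0 : b 0 - a 0 = 0 := by nlinarith [sq_nonneg (b 0 - a 0), sq_nonneg (b 1 - a 1)]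
  have h1 : b 1 - a 1 = 0 := by nlinarith [sq_nonneg (b 0 - a 0), sq_nonneg (b 1 - a 1)]
  exact h (by ext i; fin_cases i <;> simp <;> linarith)

lemma mem_line_of_Yc {a b z : Pt} (h : a ≠ b) (hz : Yc a b z = 0) :
    z ∈ affineSpan ℝ {a, b} := by
  have hD := D2_pos h
  have hzz : z = (z - a) +ᵥ a := by simp
  rw [hzz, vadd_left_mem_affineSpan_pair]
  refine ⟨Xc a b z / ((b 0 - a 0)^2 + (b 1 - a 1)^2), ?_⟩
  simp only [vsub_eq_sub]
  ext i
  fin_cases i <;> simp [Xc] <;> rw [div_mul_eq_mul_div, div_eq_iff (ne_of_gt hD)] <;>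
    simp only [Yc] at hz
  · linear_combination (b 1 - a 1) * hz
  · linear_combination -(b 0 - a 0) * hz

lemma Yc_of_mem_line {a b z : Pt} (hz : z ∈ affineSpan ℝ {a, b}) : Yc a b z = 0 := by
  have hzz : z = (z - a) +ᵥ a := by simp
  rw [hzz, vadd_left_mem_affineSpan_pair] at hz
  obtain ⟨r, hr⟩ := hz
  simp only [vsub_eq_sub] at hr
  have h0 := congrArg (· 0) hr
  have h1 := congrArg (· 1) hr
  simp at h0 h1
  simp only [Yc]
  linear_combination (b 1 - a 1) * h0 - (b 0 - a 0) * h1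

lemma openSegment_sub_left {x y m z : Pt} (hm : m ∈ openSegment ℝ x y)
    (hz : z ∈ openSegment ℝ x m) : z ∈ openSegment ℝ x y := by
  rw [openSegment_eq_image] at hm hz ⊢
  obtain ⟨θ, ⟨hθ0, hθ1⟩, hθ⟩ := hm
  obtain ⟨s, ⟨hs0, hs1⟩, hs⟩ := hz
  refine ⟨s*θ, ⟨mul_pos hs0 hθ0, by nlinarith⟩, ?_⟩
  simp only at hθ hs ⊢
  rw [← hs, ← hθ]
  module

lemma aux_cross {V : Type} (G : SimpleGraph V) (p : V → Pt) (hp : IsSLRAC G p)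
    (u v : V) (huv : u ≠ v)
    (hadj : ∀ t, G.neighborSet t = {u, v} → G.Adj u t ∧ G.Adj v t)
    (cs cb : Pt)
    (hs : ∃ t, G.neighborSet t = {u, v} ∧ cs ∈ openSegment ℝ (p v) (p t))
    (hb : ∃ t, G.neighborSet t = {u, v} ∧ cb ∈ openSegment ℝ (p u) (p t))
    (hcs : Xc (p u) (p v) cs ^ 2
        - ((p v 0 - p u 0)^2 + (p v 1 - p u 1)^2) * Xc (p u) (p v) cs
        + Yc (p u) (p v) cs ^ 2 = 0)
    (hcb : Xc (p u) (p v) cb ^ 2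
        - ((p v 0 - p u 0)^2 + (p v 1 - p u 1)^2) * Xc (p u) (p v) cb
        + Yc (p u) (p v) cb ^ 2 = 0)
    (hprod : 0 < Yc (p u) (p v) cs * Yc (p u) (p v) cb)
    (hlt : Xc (p u) (p v) cs < Xc (p u) (p v) cb) : False := by
  obtain ⟨hinj, hvert, hshare, hcross⟩ := hp
  obtain ⟨ts, hts, hcsmem⟩ := hs
  obtain ⟨tb, htb, hcbmem⟩ := hb
  obtain ⟨hadjubs, hadjvbs⟩ := hadj ts hts
  obtain ⟨hadjub, hadjvb⟩ := hadj tb htb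
  have hab : p u ≠ p v := fun h => huv (hinj h)
  have hD : 0 < (p v 0 - p u 0)^2 + (p v 1 - p u 1)^2 := D2_pos hab
  set D2 := (p v 0 - p u 0)^2 + (p v 1 - p u 1)^2 with hD2def
  set Xs := Xc (p u) (p v) cs with hXs
  set Ys := Yc (p u) (p v) cs with hYs
  set Xb := Xc (p u) (p v) cb with hXb
  set Yb := Yc (p u) (p v) cb with hYb
  -- get the crossing parameters
  have hts' : ∃ t s : ℝ, 0 < t ∧ t < 1 ∧ 0 < s ∧ s < 1 ∧
      t*Xb = (1-s)*D2 + s*Xs ∧ t*Yb = s*Ys := by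
    rcases lt_or_gt_of_ne (fun h : Ys = 0 => by simp [h] at hprod) with hneg | hpos
    · have hYbneg : Yb < 0 := by nlinarith
      obtain ⟨t, s, ht0, ht1, hs0, hs1, e1, e2⟩ :=
        key_exists D2 Xs (-Ys) Xb (-Yb) hD (by linear_combination hcs)
          (by linear_combination hcb) (by linarith) (by linarith) hlt
      exact ⟨t, s, ht0, ht1, hs0, hs1, e1, by linarith⟩
    · have hYbpos : 0 < Yb := by nlinarith
      obtain ⟨t, s, ht0, ht1, hs0, hs1, e1, e2⟩ :=
        key_exists D2 Xs Ys Xb Yb hD hcs hcb hpos hYbpos hlt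
      exact ⟨t, s, ht0, ht1, hs0, hs1, e1, e2⟩
  obtain ⟨t, s, ht0, ht1, hs0, hs1, E1, E2⟩ := hts'
  -- the crossing point
  set q : Pt := (1-t) • (p u) + t • cb with hq
  have heq : q = (1-s) • (p v) + s • cs := by
    simp only [hXb, hYb, hXs, hYs, hD2def, Xc, Yc] at E1 E2
    ext i
    fin_cases i <;> simp only [hq] <;> simp
    · have h0 : ((p v 0 - p u 0)^2 + (p v 1 - p u 1)^2) *
          (((1-t) * p u 0 + t * cb 0) - ((1-s) * p v 0 + s * cs 0)) = 0 := by
        linear_combination (p v 0 - p u 0) * E1 - (p v 1 - p u 1) * E2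
      have := (mul_eq_zero.mp h0).resolve_left (ne_of_gt hD)
      linarith
    · have h1 : ((p v 0 - p u 0)^2 + (p v 1 - p u 1)^2) *
          (((1-t) * p u 1 + t * cb 1) - ((1-s) * p v 1 + s * cs 1)) = 0 := by
        linear_combination (p v 1 - p u 1) * E1 + (p v 0 - p u 0) * E2
      have := (mul_eq_zero.mp h1).resolve_left (ne_of_gt hD)
      linarith
  have hq1 : q ∈ openSegment ℝ (p u) cb := by
    rw [openSegment_eq_image]; exact ⟨t, ⟨ht0, ht1⟩, rfl⟩
  have hq2 : q ∈ openSegment ℝ (p v) cs := by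
    rw [heq, openSegment_eq_image]; exact ⟨s, ⟨hs0, hs1⟩, rfl⟩
  have hqseg1 : q ∈ segment ℝ (p u) (p tb) :=
    (convex_segment _ _).segment_subset (left_mem_segment ℝ _ _)
      (openSegment_subset_segment _ _ _ hcbmem) (openSegment_subset_segment _ _ _ hq1)
  have hqseg2 : q ∈ segment ℝ (p v) (p ts) :=
    (convex_segment _ _).segment_subset (left_mem_segment ℝ _ _)
      (openSegment_subset_segment _ _ _ hcsmem) (openSegment_subset_segment _ _ _ hq2)
  by_cases htbts : tb = ts
  · -- shared endpoint: contradiction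
    subst htbts
    have hqeq : q = p tb := by
      have := hshare tb u v hadjub.symm hadjvb.symm huv
      have hmem : q ∈ segment ℝ (p tb) (p u) ∩ segment ℝ (p tb) (p v) := by
        constructor
        · rw [segment_symm]; exact hqseg1
        · rw [segment_symm]; exact hqseg2
      exact this hmem
    have hmo : q ∈ openSegment ℝ (p v) (p tb) := openSegment_sub_left hcsmem hq2
    rw [hqeq] at hmo
    have := right_mem_openSegment_iff.mp hmo
    exact hadjvb.ne (hinj this)
  · -- RAC crossing: right angle
    have horth := (hcross u tb v ts hadjub hadjvbs huv hadjubs.ne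
      (fun h => hadjvb.ne h.symm) htbts q ⟨hqseg1, hqseg2⟩).2.2
    -- transfer to the chords
    rw [openSegment_eq_image] at hcbmem hcsmem
    obtain ⟨θb, ⟨hθb0, _⟩, hθb⟩ := hcbmem
    obtain ⟨θs, ⟨hθs0, _⟩, hθs⟩ := hcsmem
    simp only at hθb hθs
    have hvb : cb - p u = θb • (p tb - p u) := by rw [← hθb]; module
    have hvs : cs - p v = θs • (p ts - p v) := by rw [← hθs]; module
    have horth2 : (inner ℝ (cb - p u) (cs - p v) : ℝ) = 0 := by
      rw [hvb, hvs, real_inner_smul_left, real_inner_smul_right, horth]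
      ring
    rw [inner_coord] at horth2
    simp only [PiLp.sub_apply] at horth2
    have hco : Xb*(Xs - D2) + Yb*Ys = 0 := by
      simp only [hXb, hYb, hXs, hYs, hD2def, Xc, Yc]
      linear_combination ((p v 0 - p u 0)^2 + (p v 1 - p u 1)^2) * horth2
    have hYsne : Ys ≠ 0 := fun h => by simp [h] at hprod
    have hYbne : Yb ≠ 0 := fun h => by simp [h] at hprod
    exact ortho_contra D2 Xs Ys Xb Yb hD hcs hcb hYsne hYbne hlt
      (by linear_combination hco)


/-- In a straight-line RAC drawing `p` of `G`, with `T` the set of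
vertices whose neighborhood is exactly `{u, v}`, each of the two open half-planes bounded
by the line through `p u` and `p v` contains at most one point lying simultaneously in the
relative interior of an edge segment from `u` to a member of `T` and in the relative
interior of an edge segment from `v` to a member of `T`. -/
theorem slrac_thales_crossings {V : Type} (G : SimpleGraph V) (p : V → Pt)
    (hp : IsSLRAC G p) (u v : V) (huv : u ≠ v) :
    ∀ c₁ c₂ : Pt,
      (∃ t₁ : V, G.neighborSet t₁ = {u, v} ∧ c₁ ∈ openSegment ℝ (p u) (p t₁)) →
      (∃ t₁' : V, G.neighborSet t₁' = {u, v} ∧ c₁ ∈ openSegment ℝ (p v) (p t₁')) →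
      (∃ t₂ : V, G.neighborSet t₂ = {u, v} ∧ c₂ ∈ openSegment ℝ (p u) (p t₂)) →
      (∃ t₂' : V, G.neighborSet t₂' = {u, v} ∧ c₂ ∈ openSegment ℝ (p v) (p t₂')) →
      (affineSpan ℝ {p u, p v}).SSameSide c₁ c₂ →
      c₁ = c₂ := by
  intro c₁ c₂ h1u h1v h2u h2v hside
  obtain ⟨hinj, hvert, hshare, hcross⟩ := hp
  have hab : p u ≠ p v := fun h => huv (hinj h)
  have hD : 0 < (p v 0 - p u 0)^2 + (p v 1 - p u 1)^2 := D2_pos hab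
  have hadj : ∀ t, G.neighborSet t = {u, v} → G.Adj u t ∧ G.Adj v t := by
    intro t ht
    constructor
    · have : u ∈ G.neighborSet t := by rw [ht]; simp
      exact this.symm
    · have : v ∈ G.neighborSet t := by rw [ht]; simp
      exact this.symm
  -- Thales: each crossing point sees [p u, p v] at a right angle
  have thales : ∀ c : Pt,
      (∃ t, G.neighborSet t = {u, v} ∧ c ∈ openSegment ℝ (p u) (p t)) →
      (∃ t, G.neighborSet t = {u, v} ∧ c ∈ openSegment ℝ (p v) (p t)) →
      (inner ℝ (c - p u) (c - p v) : ℝ) = 0 := by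
    intro c hcu hcv
    obtain ⟨t, ht, hmu⟩ := hcu
    obtain ⟨t', ht', hmv⟩ := hcv
    obtain ⟨hut, hvt⟩ := hadj t ht
    obtain ⟨hut', hvt'⟩ := hadj t' ht'
    by_cases htt : t = t'
    · exfalso
      subst htt
      have hceq : c = p t :=
        hshare t u v hut.symm hvt.symm huv
          ⟨by rw [segment_symm]; exact openSegment_subset_segment _ _ _ hmu,
           by rw [segment_symm]; exact openSegment_subset_segment _ _ _ hmv⟩
      rw [hceq] at hmu
      exact hut.ne (hinj (right_mem_openSegment_iff.mp hmu))
    · have horth := (hcross u t v t' hut hvt' huv hut'.ne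
        (fun h => hvt.ne h.symm) htt c
        ⟨openSegment_subset_segment _ _ _ hmu, openSegment_subset_segment _ _ _ hmv⟩).2.2
      rw [openSegment_eq_image] at hmu hmv
      obtain ⟨θ, ⟨hθ0, _⟩, hθ⟩ := hmu
      obtain ⟨θ', ⟨hθ'0, _⟩, hθ'⟩ := hmv
      simp only at hθ hθ'
      have hv1 : c - p u = θ • (p t - p u) := by rw [← hθ]; module
      have hv2 : c - p v = θ' • (p t' - p v) := by rw [← hθ']; module
      rw [hv1, hv2, real_inner_smul_left, real_inner_smul_right, horth]
      ring
  -- coordinate circle equations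
  have circ : ∀ c : Pt, (inner ℝ (c - p u) (c - p v) : ℝ) = 0 →
      Xc (p u) (p v) c ^ 2
        - ((p v 0 - p u 0)^2 + (p v 1 - p u 1)^2) * Xc (p u) (p v) c
        + Yc (p u) (p v) c ^ 2 = 0 := by
    intro c hc
    rw [inner_coord] at hc
    simp only [PiLp.sub_apply] at hc
    simp only [Xc, Yc]
    linear_combination ((p v 0 - p u 0)^2 + (p v 1 - p u 1)^2) * hc
  have hcirc1 := circ c₁ (thales c₁ h1u h1v)
  have hcirc2 := circ c₂ (thales c₂ h2u h2v)
  -- same-side: the Y coordinates have the same sign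
  obtain ⟨⟨p₁, hp₁, p₂, hp₂, hray⟩, hn1, hn2⟩ := hside
  have hY1 : Yc (p u) (p v) c₁ ≠ 0 := fun h => hn1 (mem_line_of_Yc hab h)
  have hY2 : Yc (p u) (p v) c₂ ≠ 0 := fun h => hn2 (mem_line_of_Yc hab h)
  have hYp₁ : Yc (p u) (p v) p₁ = 0 := Yc_of_mem_line hp₁
  have hYp₂ : Yc (p u) (p v) p₂ = 0 := Yc_of_mem_line hp₂
  have hne1 : c₁ -ᵥ p₁ ≠ 0 := by
    simp only [vsub_eq_sub, sub_ne_zero]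
    exact fun h => hn1 (h ▸ hp₁)
  have hne2 : c₂ -ᵥ p₂ ≠ 0 := by
    simp only [vsub_eq_sub, sub_ne_zero]
    exact fun h => hn2 (h ▸ hp₂)
  obtain ⟨r₁, r₂, hr₁, hr₂, hrr⟩ := hray.exists_pos hne1 hne2
  simp only [vsub_eq_sub] at hrr
  have hc0 := congrArg (· 0) hrr
  have hc1 := congrArg (· 1) hrr
  simp at hc0 hc1
  have hYrel : r₁ * Yc (p u) (p v) c₁ = r₂ * Yc (p u) (p v) c₂ := by
    simp only [Yc] at hYp₁ hYp₂ ⊢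
    linear_combination (p v 0 - p u 0) * hc1 - (p v 1 - p u 1) * hc0 +
      r₁ * hYp₁ - r₂ * hYp₂
  have hprod : 0 < Yc (p u) (p v) c₁ * Yc (p u) (p v) c₂ := by
    rcases lt_or_gt_of_ne hY1 with h | h
    · have : Yc (p u) (p v) c₂ < 0 := by nlinarith
      nlinarith
    · have : 0 < Yc (p u) (p v) c₂ := by nlinarith
      nlinarith
  by_contra hne
  -- distinct X coordinates
  have hXne : Xc (p u) (p v) c₁ ≠ Xc (p u) (p v) c₂ := by
    intro hXeq
    have hsq : Yc (p u) (p v) c₁ ^ 2 = Yc (p u) (p v) c₂ ^ 2 := by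
      linear_combination hcirc1 - hcirc2 -
        (Xc (p u) (p v) c₁ + Xc (p u) (p v) c₂ - ((p v 0 - p u 0)^2 + (p v 1 - p u 1)^2)) * hXeq
    have hd : (Yc (p u) (p v) c₂ - Yc (p u) (p v) c₁) * (Yc (p u) (p v) c₂ + Yc (p u) (p v) c₁) = 0 := by
      linear_combination -hsq
    have hYeq : Yc (p u) (p v) c₁ = Yc (p u) (p v) c₂ := by
      rcases mul_eq_zero.mp hd with h | h
      · linarith
      · exfalso; nlinarith [hprod, sq_nonneg (Yc (p u) (p v) c₁)]
    apply hne
    ext i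
    simp only [Xc, Yc] at hXeq hYeq
    fin_cases i <;> simp
    · have h0 : ((p v 0 - p u 0)^2 + (p v 1 - p u 1)^2) * (c₁ 0 - c₂ 0) = 0 := by
        linear_combination (p v 0 - p u 0) * hXeq - (p v 1 - p u 1) * hYeq
      have := (mul_eq_zero.mp h0).resolve_left (ne_of_gt hD)
      linarith
    · have h1 : ((p v 0 - p u 0)^2 + (p v 1 - p u 1)^2) * (c₁ 1 - c₂ 1) = 0 := by
        linear_combination (p v 1 - p u 1) * hXeq + (p v 0 - p u 0) * hYeq
      have := (mul_eq_zero.mp h1).resolve_left (ne_of_gt hD)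
      linarith
  have hprod' : 0 < Yc (p u) (p v) c₂ * Yc (p u) (p v) c₁ := by
    rw [mul_comm]; exact hprod
  rcases lt_or_gt_of_ne hXne with h | h
  · exact aux_cross G p ⟨hinj, hvert, hshare, hcross⟩ u v huv hadj c₁ c₂
      h1v h2u hcirc1 hcirc2 hprod h
  · exact aux_cross G p ⟨hinj, hvert, hshare, hcross⟩ u v huv hadj c₂ c₁
      h2v h1u hcirc2 hcirc1 hprod' h
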